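/- Let A be a fourth-order hierarchically symmetric tensor, let λ > 0 be an M-eigenvalue with unit M-eigenvectors u, v, and choose scalars p, q ≠ 0 with p²q² = λ. Then (x,y) = (pu, qv) is a critical point of f(x,y) = (1/4)(xᵀx)²(yᵀy)² - (1/2)A(x,y,x,y), and f(x,y) = -λ²/4. -/

import Mathlib

open Finset
open scoped RealInnerProductSpace

/-- The biquadratic form `A(x,y,x,y) = ∑ a_{ijkl} x_i y_j x_k y_l`. -/
noncomputable def AQ {m n : ℕ} (a : Fin m → Fin n → Fin m → Fin n → ℝ)
    (x : EuclideanSpace ℝ (Fin m)) (y : EuclideanSpace ℝ (Fin n)) : ℝ :=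
  ∑ i, ∑ j, ∑ k, ∑ l, a i j k l * x i * y j * x k * y l

/-- The contraction `A·(y,x,y) ∈ ℝ^m`, `(A·(y,x,y))_i = ∑ a_{ijkl} y_j x_k y_l`. -/
noncomputable def Ayxy {m n : ℕ} (a : Fin m → Fin n → Fin m → Fin n → ℝ)
    (x : EuclideanSpace ℝ (Fin m)) (y : EuclideanSpace ℝ (Fin n)) :
    EuclideanSpace ℝ (Fin m) :=
  WithLp.toLp 2 (fun i => ∑ k, ∑ j, ∑ l, a i j k l * y j * x k * y l)

/-- The contraction `A·(x,y,x) ∈ ℝ^n`, `(A·(x,y,x))_l = ∑ a_{ijkl} x_i y_j x_k`. -/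
noncomputable def Axyx {m n : ℕ} (a : Fin m → Fin n → Fin m → Fin n → ℝ)
    (x : EuclideanSpace ℝ (Fin m)) (y : EuclideanSpace ℝ (Fin n)) :
    EuclideanSpace ℝ (Fin n) :=
  WithLp.toLp 2 (fun l => ∑ i, ∑ j, ∑ k, a i j k l * x i * y j * x k)

/-- The objective function `f(x,y) = (1/4)(xᵀx)²(yᵀy)² - (1/2) A(x,y,x,y)`. -/
noncomputable def fobj {m n : ℕ} (a : Fin m → Fin n → Fin m → Fin n → ℝ)
    (x : EuclideanSpace ℝ (Fin m)) (y : EuclideanSpace ℝ (Fin n)) : ℝ :=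
  (1/4) * ‖x‖^4 * ‖y‖^4 - (1/2) * AQ a x y

/-- The shifted objective `f_t(x,y) = f(x,y) - (t/2)(xᵀx)(yᵀy)`. -/
noncomputable def ftobj {m n : ℕ} (a : Fin m → Fin n → Fin m → Fin n → ℝ) (t : ℝ)
    (x : EuclideanSpace ℝ (Fin m)) (y : EuclideanSpace ℝ (Fin n)) : ℝ :=
  (1/4) * ‖x‖^4 * ‖y‖^4 - (1/2) * AQ a x y - (t/2) * (‖x‖^2 * ‖y‖^2)

/-- Hierarchical symmetry: `a_{ijkl} = a_{kjil} = a_{ilkj}`. -/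
def HierSym {m n : ℕ} (a : Fin m → Fin n → Fin m → Fin n → ℝ) : Prop :=
  ∀ i j k l, a i j k l = a k j i l ∧ a i j k l = a i l k j


lemma smul_app {m : ℕ} (p : ℝ) (x : EuclideanSpace ℝ (Fin m)) (i : Fin m) :
    (p • x) i = p * x i := rfl

lemma Ayxy_smul {m n : ℕ} (a : Fin m → Fin n → Fin m → Fin n → ℝ) (p q : ℝ)
    (x : EuclideanSpace ℝ (Fin m)) (y : EuclideanSpace ℝ (Fin n)) :
    Ayxy a (p • x) (q • y) = (p * q^2) • Ayxy a x y := by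
  ext i
  simp only [Ayxy, smul_app, WithLp.ofLp_toLp, Finset.mul_sum]
  refine Finset.sum_congr rfl fun k _ => Finset.sum_congr rfl fun j _ =>
    Finset.sum_congr rfl fun l _ => by ring

lemma Axyx_smul {m n : ℕ} (a : Fin m → Fin n → Fin m → Fin n → ℝ) (p q : ℝ)
    (x : EuclideanSpace ℝ (Fin m)) (y : EuclideanSpace ℝ (Fin n)) :
    Axyx a (p • x) (q • y) = (p^2 * q) • Axyx a x y := by
  ext l
  simp only [Axyx, smul_app, WithLp.ofLp_toLp, Finset.mul_sum]
  refine Finset.sum_congr rfl fun i _ => Finset.sum_congr rfl fun j _ =>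
    Finset.sum_congr rfl fun k _ => by ring

lemma AQ_smul {m n : ℕ} (a : Fin m → Fin n → Fin m → Fin n → ℝ) (p q : ℝ)
    (x : EuclideanSpace ℝ (Fin m)) (y : EuclideanSpace ℝ (Fin n)) :
    AQ a (p • x) (q • y) = (p^2 * q^2) * AQ a x y := by
  simp only [AQ, smul_app, Finset.mul_sum]
  refine Finset.sum_congr rfl fun i _ => Finset.sum_congr rfl fun j _ =>
    Finset.sum_congr rfl fun k _ => Finset.sum_congr rfl fun l _ => by ring

lemma AQ_eq {m n : ℕ} (a : Fin m → Fin n → Fin m → Fin n → ℝ)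
    (x : EuclideanSpace ℝ (Fin m)) (y : EuclideanSpace ℝ (Fin n)) :
    AQ a x y = ∑ i, x i * Ayxy a x y i := by
  simp only [AQ, Ayxy, WithLp.ofLp_toLp, Finset.mul_sum]
  refine Finset.sum_congr rfl fun i _ => ?_
  rw [Finset.sum_comm]
  refine Finset.sum_congr rfl fun j _ => Finset.sum_congr rfl fun k _ =>
    Finset.sum_congr rfl fun l _ => by ring

lemma norm_sq_eq {m : ℕ} (x : EuclideanSpace ℝ (Fin m)) :
    ‖x‖^2 = ∑ i, x i * x i := by
  rw [← real_inner_self_eq_norm_sq]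
  rw [real_inner_self_eq_norm_sq, EuclideanSpace.norm_eq, Real.sq_sqrt (by positivity)]
  simp [sq]

/-- If `λ > 0` is an M-eigenvalue with unit M-eigenvectors `u, v` and
`p, q ≠ 0` satisfy `p²q² = λ`, then `(x,y) = (pu, qv)` is a critical point of `f`
and `f(x,y) = -λ²/4`. -/
theorem stmt3 {m n : ℕ} (a : Fin m → Fin n → Fin m → Fin n → ℝ)
    (hsym : HierSym a) (lam : ℝ) (hlam : 0 < lam)
    (u : EuclideanSpace ℝ (Fin m)) (v : EuclideanSpace ℝ (Fin n))
    (hu : ‖u‖ = 1) (hv : ‖v‖ = 1)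
    (heig1 : Ayxy a u v = lam • u) (heig2 : Axyx a u v = lam • v)
    (p q : ℝ) (hp : p ≠ 0) (hq : q ≠ 0) (hpq : p ^ 2 * q ^ 2 = lam) :
    Ayxy a (p • u) (q • v) = (‖p • u‖ ^ 2 * ‖q • v‖ ^ 4) • (p • u) ∧
      Axyx a (p • u) (q • v) = (‖p • u‖ ^ 4 * ‖q • v‖ ^ 2) • (q • v) ∧
      fobj a (p • u) (q • v) = -lam ^ 2 / 4 := by

  have hnpu : ‖p • u‖ = |p| := by rw [norm_smul, hu]; simp
  have hnqv : ‖q • v‖ = |q| := by rw [norm_smul, hv]; simp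
  have hAQ : AQ a u v = lam := by
    rw [AQ_eq, heig1]
    simp only [smul_app]
    have := norm_sq_eq u
    rw [hu] at this
    have h2 : ∑ i, u i * (lam * u i) = lam * ∑ i, u i * u i := by
      rw [Finset.mul_sum]; exact Finset.sum_congr rfl fun i _ => by ring
    rw [h2, ← this]; ring
  refine ⟨?_, ?_, ?_⟩
  · rw [Ayxy_smul, heig1, smul_smul, smul_smul, hnpu, hnqv]
    congr 1
    rw [← hpq]
    rw [sq_abs, ← abs_pow]
    rw [abs_of_nonneg (by positivity : (0:ℝ) ≤ q^4)]
    ring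
  · rw [Axyx_smul, heig2, smul_smul, smul_smul, hnpu, hnqv]
    congr 1
    rw [← hpq, sq_abs, ← abs_pow, abs_of_nonneg (by positivity : (0:ℝ) ≤ p^4)]
    ring
  · rw [fobj, AQ_smul, hAQ, hnpu, hnqv, ← abs_pow, ← abs_pow,
      abs_of_nonneg (by positivity : (0:ℝ) ≤ p^4),
      abs_of_nonneg (by positivity : (0:ℝ) ≤ q^4), ← hpq]
    ring
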